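/- As e → 1 (from either side), α₁'(e) ~ -2 log|e - 1|, i.e. the limit of α₁'(e)/(-2 log|e-1|) as e → 1 equals 1. -/

import Mathlib

open Real Set Filter Topology

noncomputable def theta1 (e : ℝ) : ℝ := Real.arccos (-e)

/-- α₁'(e) = 2√2 ∫₀^{θ₁(e)} (e + cos θ)^{-1/2} dθ. -/
noncomputable def dalpha1 (e : ℝ) : ℝ :=
  2 * Real.sqrt 2 * ∫ θ in (0:ℝ)..(theta1 e), 1 / Real.sqrt (e + Real.cos θ)

/-!
On `[0, θ₁(e)]` one has `sin θ = √(1 - cos θ) √(1 + cos θ)`, so the integrand `1 / √(e + cos θ)`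
differs from `sin θ / (√(e + cos θ) √(1 + cos θ))` only by the factor `√(1 - cos θ)`, which lies
between `√(1 - cos a)` and `√2` on `[a, θ₁(e)]` and tends to `√2` as `a → π`. The second integrand
has the explicit primitive `-2 log (√(e + cos θ) + √(1 + cos θ))`, whose value at `θ₁(e)` is
`-log |e - 1|` because one of the two square roots vanishes there. The remaining piece `[0, a]`
stays bounded as `e → 1`, so the ratio is squeezed between `1 - o(1)` and
`√2 / √(1 - cos a) + o(1)`, and letting `a → π` gives the limit `1`.
-/

open MeasureTheory

theorem tendsto_of_eventually_mem_Ioo_of_tendsto {α ι : Type*} {l : Filter α} {m : Filter ι}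
    [m.NeBot] {f : α → ℝ} {c : ι → ℝ} {y : ℝ} (hc : Tendsto c m (𝓝 y))
    (hf : ∀ᶠ i in m, ∀ ε > 0, ∀ᶠ x in l, y - ε < f x ∧ f x < c i + ε) :
    Tendsto f l (𝓝 y) := by
  refine Metric.tendsto_nhds.2 fun ε hε => ?_
  obtain ⟨i, hi, hci⟩ :=
    (hf.and (hc.eventually (eventually_lt_nhds (lt_add_of_pos_right y (half_pos hε))))).exists
  filter_upwards [hi (ε / 2) (half_pos hε)] with x hx
  rw [Real.dist_eq, abs_lt]
  constructor <;> linarith [hx.1, hx.2]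

lemma sin_eq_sqrt_one_sub_cos_mul_sqrt_one_add_cos {θ : ℝ} (h0 : 0 ≤ θ) (hπ : θ ≤ π) :
    sin θ = √(1 - cos θ) * √(1 + cos θ) := by
  rw [sin_eq_sqrt_one_sub_cos_sq h0 hπ, ← sqrt_mul (by linarith [cos_le_one θ])]
  ring_nf

lemma cos_theta1 {e : ℝ} (he : -1 ≤ e) : cos (theta1 e) = max (-e) (-1) := by
  rcases le_total e 1 with he1 | he1
  · rw [theta1, cos_arccos (by linarith) (by linarith), max_eq_left (by linarith)]
  · rw [theta1, arccos_eq_pi.2 (by linarith), cos_pi, max_eq_right (by linarith)]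

lemma sqrt_add_sqrt_at_theta1 {e : ℝ} (he : -1 ≤ e) :
    √(e + cos (theta1 e)) + √(1 + cos (theta1 e)) = √|e - 1| := by
  rw [cos_theta1 he]
  rcases le_total e 1 with he1 | he1
  · rw [max_eq_left (by linarith), abs_of_nonpos (by linarith), add_neg_cancel, sqrt_zero,
      zero_add, ← sub_eq_add_neg, neg_sub]
  · rw [max_eq_right (by linarith), abs_of_nonneg (by linarith)]
    simp [sub_eq_add_neg]

/-- A primitive of `θ ↦ sin θ / (√(e + cos θ) √(1 + cos θ))`, which is `√(1 - cos θ) / √(e + cos θ)`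
on `[0, π]`. -/
noncomputable def logPrimitive (e θ : ℝ) : ℝ := -2 * log (√(e + cos θ) + √(1 + cos θ))

lemma logPrimitive_theta1 {e : ℝ} (he : -1 ≤ e) : logPrimitive e (theta1 e) = -log |e - 1| := by
  rw [logPrimitive, sqrt_add_sqrt_at_theta1 he, log_sqrt (abs_nonneg _)]
  ring

lemma hasDerivAt_logPrimitive {e θ : ℝ} (hθ : θ ∈ Ico 0 π) (he : 0 < e + cos θ) :
    HasDerivAt (logPrimitive e) (√(1 - cos θ) / √(e + cos θ)) θ := by
  have hcos : 0 < 1 + cos θ := by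
    have := cos_lt_cos_of_nonneg_of_le_pi hθ.1 le_rfl hθ.2
    rw [cos_pi] at this; linarith
  have hA := ((hasDerivAt_cos θ).const_add e).sqrt he.ne'
  have hB := ((hasDerivAt_cos θ).const_add 1).sqrt hcos.ne'
  have hS : √(e + cos θ) + √(1 + cos θ) ≠ 0 := by positivity
  refine (((hA.add hB).log hS).const_mul (-2 : ℝ)).congr_deriv ?_
  have hA_sq := sq_sqrt he.le
  have hB_sq := sq_sqrt hcos.le
  have hA_pos := sqrt_pos.2 he
  have hB_pos := sqrt_pos.2 hcos
  rw [sin_eq_sqrt_one_sub_cos_mul_sqrt_one_add_cos hθ.1 hθ.2.le, Pi.add_apply]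
  field_simp
  ring

lemma integral_sqrt_one_sub_cos_div_sqrt_add_cos {e a : ℝ} (ha : 0 ≤ a) (haT : a < theta1 e)
    (he : e ≠ 1) :
    IntervalIntegrable (fun θ => √(1 - cos θ) / √(e + cos θ)) volume a (theta1 e) ∧
      ∫ θ in a..theta1 e, √(1 - cos θ) / √(e + cos θ) = -log |e - 1| - logPrimitive e a := by
  have he1 : -1 ≤ e := by linarith [arccos_pos.1 (ha.trans_lt haT)]
  have hTπ : theta1 e ≤ π := arccos_le_pi _
  have hcos_le : ∀ θ ∈ Icc a (theta1 e), cos (theta1 e) ≤ cos θ := fun θ hθ =>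
    cos_le_cos_of_nonneg_of_le_pi (ha.trans hθ.1) hTπ hθ.2
  have hpos : ∀ θ ∈ Ioo a (theta1 e), 0 < e + cos θ := fun θ hθ => by
    have := cos_lt_cos_of_nonneg_of_le_pi (ha.trans hθ.1.le) hTπ hθ.2
    rw [cos_theta1 he1] at this
    linarith [le_max_left (-e) (-1)]
  have hderiv : ∀ θ ∈ Ioo a (theta1 e),
      HasDerivAt (logPrimitive e) (√(1 - cos θ) / √(e + cos θ)) θ := fun θ hθ =>
    hasDerivAt_logPrimitive ⟨ha.trans hθ.1.le, hθ.2.trans_le hTπ⟩ (hpos θ hθ)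
  -- the sum of square roots only decreases towards `θ₁(e)`, where it equals `√|e - 1| > 0`
  have hcont : ContinuousOn (logPrimitive e) (Icc a (theta1 e)) := by
    refine continuousOn_const.mul (ContinuousOn.log (by fun_prop) fun θ hθ => ?_)
    have hmin : √|e - 1| ≤ √(e + cos θ) + √(1 + cos θ) :=
      sqrt_add_sqrt_at_theta1 he1 ▸ add_le_add (sqrt_le_sqrt (by linarith [hcos_le θ hθ]))
        (sqrt_le_sqrt (by linarith [hcos_le θ hθ]))
    exact ((sqrt_pos.2 (abs_pos.2 (sub_ne_zero.2 he))).trans_le hmin).ne'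
  have hint : IntervalIntegrable (fun θ => √(1 - cos θ) / √(e + cos θ)) volume a (theta1 e) :=
    (intervalIntegrable_iff_integrableOn_Ioc_of_le haT.le).2
      (intervalIntegral.integrableOn_deriv_of_nonneg hcont hderiv fun θ _ => by positivity)
  refine ⟨hint, ?_⟩
  rw [intervalIntegral.integral_eq_sub_of_hasDerivAt_of_le haT.le hcont hderiv hint,
    logPrimitive_theta1 he1]

lemma intervalIntegrable_one_div_sqrt_add_cos {e a : ℝ} (ha : 0 < a) (haT : a < theta1 e)
    (he : e ≠ 1) : IntervalIntegrable (fun θ => 1 / √(e + cos θ)) volume a (theta1 e) := by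
  have hcos : ∀ θ ∈ Icc a (theta1 e), cos θ < 1 := fun θ hθ => by
    simpa using
      cos_lt_cos_of_nonneg_of_le_pi le_rfl (hθ.2.trans (arccos_le_pi _)) (ha.trans_le hθ.1)
  have hw : ContinuousOn (fun θ => (√(1 - cos θ))⁻¹) (uIcc a (theta1 e)) := by
    rw [uIcc_of_le haT.le]
    exact ContinuousOn.inv₀ (by fun_prop) fun θ hθ => (sqrt_pos.2 (by linarith [hcos θ hθ])).ne'
  refine ((integral_sqrt_one_sub_cos_div_sqrt_add_cos ha.le haT he).1.mul_continuousOn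
    hw).congr_uIoo fun θ hθ => ?_
  rw [uIoo_of_le haT.le] at hθ
  have := sqrt_pos.2 (sub_pos.2 (hcos θ (Ioo_subset_Icc_self hθ)))
  field_simp

lemma integral_one_div_sqrt_add_cos_bounds {e a : ℝ} (ha : 0 < a) (haT : a < theta1 e)
    (he : e ≠ 1) :
    √(1 - cos a) * ∫ θ in a..theta1 e, 1 / √(e + cos θ) ≤ -log |e - 1| - logPrimitive e a ∧
      -log |e - 1| - logPrimitive e a ≤ √2 * ∫ θ in a..theta1 e, 1 / √(e + cos θ) := by
  obtain ⟨hg, hval⟩ := integral_sqrt_one_sub_cos_div_sqrt_add_cos ha.le haT he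
  have hf := intervalIntegrable_one_div_sqrt_add_cos ha haT he
  rw [← hval, ← intervalIntegral.integral_const_mul, ← intervalIntegral.integral_const_mul]
  constructor
  · refine intervalIntegral.integral_mono_on haT.le (hf.const_mul _) hg fun θ hθ => ?_
    have : cos θ ≤ cos a :=
      cos_le_cos_of_nonneg_of_le_pi ha.le (hθ.2.trans (arccos_le_pi _)) hθ.1
    rw [div_eq_mul_one_div (√(1 - cos θ))]
    gcongr
  · refine intervalIntegral.integral_mono_on haT.le hg (hf.const_mul _) fun θ _ => ?_
    rw [div_eq_mul_one_div (√(1 - cos θ))]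
    gcongr
    linarith [neg_one_le_cos θ]

lemma integral_one_div_sqrt_add_cos_le {e a : ℝ} (ha : 0 ≤ a) (haπ : a ≤ π)
    (he : 0 < e + cos a) :
    IntervalIntegrable (fun θ => 1 / √(e + cos θ)) volume 0 a ∧
      ∫ θ in (0 : ℝ)..a, 1 / √(e + cos θ) ≤ a / √(e + cos a) := by
  have hcos : ∀ θ ∈ Icc 0 a, cos a ≤ cos θ := fun θ hθ =>
    cos_le_cos_of_nonneg_of_le_pi hθ.1 haπ hθ.2
  have hf : IntervalIntegrable (fun θ => 1 / √(e + cos θ)) volume 0 a := by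
    refine ContinuousOn.intervalIntegrable ?_
    rw [uIcc_of_le ha]
    exact continuousOn_const.div (by fun_prop) fun θ hθ =>
      (sqrt_pos.2 (by linarith [hcos θ hθ])).ne'
  refine ⟨hf, ?_⟩
  calc ∫ θ in (0 : ℝ)..a, 1 / √(e + cos θ)
      ≤ ∫ _ in (0 : ℝ)..a, 1 / √(e + cos a) :=
        intervalIntegral.integral_mono_on ha hf intervalIntegrable_const fun θ hθ => by
          gcongr
          exact hcos θ hθ
    _ = a / √(e + cos a) := by rw [intervalIntegral.integral_const, smul_eq_mul, sub_zero,
      mul_one_div]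

lemma dalpha1_div_bounds {e a : ℝ} (ha : 0 < a) (haT : a < theta1 e) (he : e ≠ 1)
    (he1 : |e - 1| < 1) :
    1 - logPrimitive e a * (-log |e - 1|)⁻¹ ≤ dalpha1 e / (-2 * log |e - 1|) ∧
      dalpha1 e / (-2 * log |e - 1|) ≤ √2 * (a / √(e + cos a)) * (-log |e - 1|)⁻¹
        + √2 / √(1 - cos a) * (1 - logPrimitive e a * (-log |e - 1|)⁻¹) := by
  have hL : 0 < -log |e - 1| := neg_pos.2 (log_neg (abs_pos.2 (sub_ne_zero.2 he)) he1)
  have hTπ : theta1 e ≤ π := arccos_le_pi _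
  have hcosa : 0 < e + cos a := by
    have := cos_lt_cos_of_nonneg_of_le_pi ha.le hTπ haT
    rw [cos_theta1 (by linarith [arccos_pos.1 (ha.trans haT)])] at this
    linarith [le_max_left (-e) (-1)]
  have hw : 0 < √(1 - cos a) := sqrt_pos.2 (by
    simpa using cos_lt_cos_of_nonneg_of_le_pi le_rfl (haT.le.trans hTπ) ha)
  obtain ⟨hf₀, hI₀⟩ := integral_one_div_sqrt_add_cos_le ha.le (haT.le.trans hTπ) hcosa
  obtain ⟨hI₁low, hI₁upp⟩ := integral_one_div_sqrt_add_cos_bounds ha haT he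
  set L := -log |e - 1| with hL_def
  set P := logPrimitive e a
  set I₀ := ∫ θ in (0 : ℝ)..a, 1 / √(e + cos θ)
  set I₁ := ∫ θ in a..theta1 e, 1 / √(e + cos θ)
  have hR : dalpha1 e / (-2 * log |e - 1|) = √2 * (I₀ + I₁) / L := by
    have hsplit : dalpha1 e = 2 * (√2 * (I₀ + I₁)) := by
      rw [dalpha1, ← intervalIntegral.integral_add_adjacent_intervals hf₀
        (intervalIntegrable_one_div_sqrt_add_cos ha haT he)]
      ring
    rw [hsplit, show -2 * log |e - 1| = 2 * L by rw [hL_def]; ring,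
      mul_div_mul_left _ _ two_ne_zero]
  have hI₀_nonneg : 0 ≤ I₀ := intervalIntegral.integral_nonneg ha.le fun θ _ => by positivity
  rw [hR]
  constructor
  · calc 1 - P * L⁻¹ = (L - P) / L := by field_simp
      _ ≤ √2 * (I₀ + I₁) / L := by
        gcongr
        nlinarith [mul_nonneg (sqrt_nonneg 2) hI₀_nonneg]
  · calc √2 * (I₀ + I₁) / L ≤ √2 * (a / √(e + cos a) + (L - P) / √(1 - cos a)) / L := by
          gcongr
          rwa [le_div_iff₀' hw]
      _ = _ := by field_simp

lemma tendsto_inv_neg_log_abs_sub_one :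
    Tendsto (fun e : ℝ => (-log |e - 1|)⁻¹) (𝓝[≠] 1) (𝓝 0) := by
  have hsub : Tendsto (fun e : ℝ => e - 1) (𝓝[≠] 1) (𝓝[≠] 0) := by
    have := Filter.map_subRight_nhdsNE (c := (1 : ℝ)) (a := 1)
    rw [sub_self] at this
    exact this.le
  simp only [log_abs]
  exact (tendsto_neg_atBot_atTop.comp (tendsto_log_nhdsNE_zero.comp hsub)).inv_tendsto_atTop

lemma eventually_dalpha1_div_mem_Ioo {a : ℝ} (ha : 0 < a) (haπ : a < π) {ε : ℝ} (hε : 0 < ε) :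
    ∀ᶠ e in 𝓝[≠] 1, 1 - ε < dalpha1 e / (-2 * log |e - 1|) ∧
      dalpha1 e / (-2 * log |e - 1|) < √2 / √(1 - cos a) + ε := by
  have hLinv := tendsto_inv_neg_log_abs_sub_one
  have hcos : 0 < 1 + cos a := by
    have := cos_lt_cos_of_nonneg_of_le_pi ha.le le_rfl haπ
    rw [cos_pi] at this; linarith
  have hP : Tendsto (fun e => logPrimitive e a) (𝓝[≠] 1) (𝓝 (logPrimitive 1 a)) := by
    refine (continuousAt_const.mul (ContinuousAt.log (by fun_prop) ?_)).tendsto.mono_left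
      nhdsWithin_le_nhds
    have := sqrt_pos.2 hcos
    positivity
  have hlow : Tendsto (fun e => 1 - logPrimitive e a * (-log |e - 1|)⁻¹) (𝓝[≠] 1) (𝓝 1) := by
    simpa using tendsto_const_nhds.sub (hP.mul hLinv)
  have hq : ContinuousAt (fun e : ℝ => √2 * (a / √(e + cos a))) 1 :=
    continuousAt_const.mul (continuousAt_const.div (by fun_prop) (sqrt_pos.2 hcos).ne')
  have hhigh : Tendsto (fun e => √2 * (a / √(e + cos a)) * (-log |e - 1|)⁻¹
      + √2 / √(1 - cos a) * (1 - logPrimitive e a * (-log |e - 1|)⁻¹))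
      (𝓝[≠] 1) (𝓝 (√2 / √(1 - cos a))) := by
    simpa using ((hq.tendsto.mono_left nhdsWithin_le_nhds).mul hLinv).add (hlow.const_mul _)
  have hθ₁ : Tendsto theta1 (𝓝[≠] 1) (𝓝 π) := by
    rw [← arccos_neg_one]
    exact ((continuous_arccos.comp continuous_neg).tendsto 1).mono_left nhdsWithin_le_nhds
  have hnear : ∀ᶠ e in 𝓝[≠] (1 : ℝ), |e - 1| < 1 :=
    eventually_nhdsWithin_of_eventually_nhds (Metric.ball_mem_nhds 1 one_pos)
  filter_upwards [self_mem_nhdsWithin, hθ₁.eventually_const_lt haπ, hnear,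
    hlow.eventually_const_lt (sub_lt_self 1 hε),
    hhigh.eventually_lt_const (lt_add_of_pos_right _ hε)] with e he haT he1 hlo hhi
  obtain ⟨h₁, h₂⟩ := dalpha1_div_bounds ha haT he he1
  exact ⟨hlo.trans_le h₁, h₂.trans_lt hhi⟩

/-- α₁'(e) ~ -2 log|e-1| as e → 1, i.e.
α₁'(e)/(-2 log|e-1|) → 1 as e → 1 (from either side). -/
theorem dalpha1_log_asymptotics :
    Tendsto (fun e : ℝ => dalpha1 e / (-2 * Real.log |e - 1|)) (𝓝[≠] 1) (𝓝 1) := by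
  refine tendsto_of_eventually_mem_Ioo_of_tendsto (m := 𝓝[<] π)
    (c := fun a => √2 / √(1 - cos a)) ?_ ?_
  · have h2 : √(1 - cos π) = √2 := by norm_num
    have hc : ContinuousAt (fun a => √2 / √(1 - cos a)) π :=
      continuousAt_const.div (by fun_prop) (by rw [h2]; positivity)
    have := hc.tendsto
    rw [h2, div_self (by positivity)] at this
    exact this.mono_left nhdsWithin_le_nhds
  · filter_upwards [Ioo_mem_nhdsLT pi_pos] with a ha ε hε
    exact eventually_dalpha1_div_mem_Ioo ha.1 ha.2 hε
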